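/- arXiv:1507.06850 — 2 statements merged into one kernel-verified Lean document; each statement's English description precedes it below -/
import Mathlib

section
/- Let D be an m×m real matrix such that DD' is positive definite, let A be an m×k real matrix, B a vector in R^m, and let C = {z ∈ R^m : A'z has all nonnegative components}. Let z̄ be the minimizer over z ∈ C of ‖D'z − D⁻¹B‖. Then for every scalar α > 0, the vector α·z̄ minimizes the function z ↦ (1/2)z'DD'z − α·B'z over C, and the minimum value equals −(1/2)α²·z̄'DD'z̄. -/
open Matrix

noncomputable def vnorm {m : ℕ} (v : Fin m → ℝ) : ℝ := Real.sqrt (v ⬝ᵥ v)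

/-!
Since `D` is invertible, `‖Dᵀz − D⁻¹B‖² = zᵀDDᵀz − 2Bᵀz + const`, so `z̄` minimizes
`g(z) = ½ zᵀDDᵀz − Bᵀz` on `C`. Because `C` is a cone, `½ zᵀDDᵀz − α Bᵀz = α² g(α⁻¹z)`,
whence `α z̄` minimizes the scaled objective. Finally `t ↦ g(t z̄)` is a quadratic in `t ≥ 0`
minimized at the interior point `t = 1`, so its derivative `z̄ᵀDDᵀz̄ − Bᵀz̄` vanishes there,
which gives the value of the minimum.
-/

lemma two_mul_eq_of_isMinOn_Ici_one {a b : ℝ}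
    (h : IsMinOn (fun t : ℝ => a * t ^ 2 - b * t) (Set.Ici 0) 1) : 2 * a = b := by
  have hloc : IsLocalMin (fun t : ℝ => a * t ^ 2 - b * t) 1 :=
    h.isLocalMin (Ici_mem_nhds zero_lt_one)
  have hderiv : HasDerivAt (fun t : ℝ => a * t ^ 2 - b * t) (a * (2 * 1) - b) 1 := by
    simpa using
      ((hasDerivAt_pow 2 (1 : ℝ)).const_mul a).fun_sub ((hasDerivAt_id (1 : ℝ)).const_mul b)
  linarith [hloc.hasDerivAt_eq_zero hderiv]

section Cone

variable {n : Type*} [Fintype n]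

lemma smul_mem_setOf_mulVec_nonneg {ι : Type*} (M : Matrix ι n ℝ) {t : ℝ} (ht : 0 ≤ t)
    {z : n → ℝ} (hz : z ∈ {z : n → ℝ | ∀ i, 0 ≤ (M *ᵥ z) i}) :
    t • z ∈ {z : n → ℝ | ∀ i, 0 ≤ (M *ᵥ z) i} := fun i => by
  rw [mulVec_smul, Pi.smul_apply, smul_eq_mul]
  exact mul_nonneg ht (hz i)

lemma smul_dotProduct_mulVec_smul (Q : Matrix n n ℝ) (t : ℝ) (z : n → ℝ) :
    (t • z) ⬝ᵥ Q *ᵥ (t • z) = t ^ 2 * (z ⬝ᵥ Q *ᵥ z) := by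
  rw [mulVec_smul, smul_dotProduct, dotProduct_smul, smul_eq_mul, smul_eq_mul]
  ring

variable {C : Set (n → ℝ)} (hC : ∀ t : ℝ, 0 ≤ t → ∀ z ∈ C, t • z ∈ C)
  {Q : Matrix n n ℝ} {B zbar : n → ℝ}
  (hmin : IsMinOn (fun z => (1 / 2) * (z ⬝ᵥ Q *ᵥ z) - B ⬝ᵥ z) C zbar)
include hC hmin

lemma isMinOn_smul_of_isMinOn_cone {α : ℝ} (hα : 0 < α) :
    IsMinOn (fun z => (1 / 2) * (z ⬝ᵥ Q *ᵥ z) - α * (B ⬝ᵥ z)) C (α • zbar) := by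
  refine isMinOn_iff.mpr fun z hz => ?_
  have hle := isMinOn_iff.mp hmin _ (hC α⁻¹ (inv_nonneg.mpr hα.le) z hz)
  simp only [smul_dotProduct_mulVec_smul, dotProduct_smul, smul_eq_mul] at hle ⊢
  have hscaled := mul_le_mul_of_nonneg_left hle (sq_nonneg α)
  field_simp at hscaled ⊢
  linarith

lemma dotProduct_mulVec_eq_of_isMinOn_cone (hzbar : zbar ∈ C) :
    zbar ⬝ᵥ Q *ᵥ zbar = B ⬝ᵥ zbar := by
  have hray : IsMinOn (fun t : ℝ => (1 / 2 * (zbar ⬝ᵥ Q *ᵥ zbar)) * t ^ 2 - (B ⬝ᵥ zbar) * t)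
      (Set.Ici 0) 1 := by
    refine isMinOn_iff.mpr fun t (ht : 0 ≤ t) => ?_
    have hle := isMinOn_iff.mp hmin _ (hC t ht zbar hzbar)
    simp only [smul_dotProduct_mulVec_smul, dotProduct_smul, smul_eq_mul] at hle ⊢
    linarith
  linarith [two_mul_eq_of_isMinOn_Ici_one hray]

end Cone

lemma transpose_mulVec_sub_dotProduct_self {n : Type*} [Fintype n] [DecidableEq n]
    {D : Matrix n n ℝ} (hD : IsUnit D.det) (B z : n → ℝ) :
    (Dᵀ *ᵥ z - D⁻¹ *ᵥ B) ⬝ᵥ (Dᵀ *ᵥ z - D⁻¹ *ᵥ B)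
      = z ⬝ᵥ (D * Dᵀ) *ᵥ z - 2 * (B ⬝ᵥ z) + (D⁻¹ *ᵥ B) ⬝ᵥ (D⁻¹ *ᵥ B) := by
  have hquad : z ⬝ᵥ (D * Dᵀ) *ᵥ z = Dᵀ *ᵥ z ⬝ᵥ Dᵀ *ᵥ z := by
    rw [← mulVec_mulVec, dotProduct_mulVec, ← mulVec_transpose]
  have hlin : Dᵀ *ᵥ z ⬝ᵥ D⁻¹ *ᵥ B = B ⬝ᵥ z := by
    rw [mulVec_transpose, ← dotProduct_mulVec, mulVec_mulVec, mul_nonsing_inv D hD, one_mulVec,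
      dotProduct_comm]
  rw [sub_dotProduct, dotProduct_sub, dotProduct_sub, hquad, hlin,
    dotProduct_comm (D⁻¹ *ᵥ B), hlin]
  ring

lemma vnorm_le_vnorm_iff {m : ℕ} (v w : Fin m → ℝ) : vnorm v ≤ vnorm w ↔ v ⬝ᵥ v ≤ w ⬝ᵥ w :=
  Real.sqrt_le_sqrt_iff (Finset.sum_nonneg fun i _ => mul_self_nonneg (w i))

lemma isMinOn_quadratic_of_isMinOn_vnorm {m : ℕ} {D : Matrix (Fin m) (Fin m) ℝ}
    (hD : IsUnit D.det) {B zbar : Fin m → ℝ} {C : Set (Fin m → ℝ)}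
    (hmin : IsMinOn (fun z => vnorm (Dᵀ *ᵥ z - D⁻¹ *ᵥ B)) C zbar) :
    IsMinOn (fun z => (1 / 2) * (z ⬝ᵥ (D * Dᵀ) *ᵥ z) - B ⬝ᵥ z) C zbar := by
  refine isMinOn_iff.mpr fun z hz => ?_
  have hle := (vnorm_le_vnorm_iff _ _).mp (isMinOn_iff.mp hmin z hz)
  rw [transpose_mulVec_sub_dotProduct_self hD, transpose_mulVec_sub_dotProduct_self hD] at hle
  linarith

theorem stmt0 {m k : ℕ} (D : Matrix (Fin m) (Fin m) ℝ) (hD : (D * Dᵀ).PosDef)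
    (A : Matrix (Fin m) (Fin k) ℝ) (B : Fin m → ℝ)
    (C : Set (Fin m → ℝ)) (hC : C = {z | ∀ i, 0 ≤ (Aᵀ.mulVec z) i})
    (zbar : Fin m → ℝ) (hzbarC : zbar ∈ C)
    (hzbar : IsMinOn (fun z => vnorm (Dᵀ.mulVec z - D⁻¹.mulVec B)) C zbar)
    (α : ℝ) (hα : 0 < α) :
    α • zbar ∈ C ∧
    IsMinOn (fun z => (1/2) * (z ⬝ᵥ (D * Dᵀ).mulVec z) - α * (B ⬝ᵥ z)) C (α • zbar) ∧
    (1/2) * ((α • zbar) ⬝ᵥ (D * Dᵀ).mulVec (α • zbar)) - α * (B ⬝ᵥ (α • zbar))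
      = -(1/2) * α^2 * (zbar ⬝ᵥ (D * Dᵀ).mulVec zbar) := by
  have hdet : IsUnit D.det := by
    have h := (isUnit_iff_isUnit_det _).mp hD.isUnit
    rw [det_mul] at h
    exact isUnit_of_mul_isUnit_left h
  have hcone : ∀ t : ℝ, 0 ≤ t → ∀ z ∈ C, t • z ∈ C := by
    subst hC
    exact fun t ht z hz => smul_mem_setOf_mulVec_nonneg Aᵀ ht hz
  have hmin := isMinOn_quadratic_of_isMinOn_vnorm hdet hzbar
  have heuler := dotProduct_mulVec_eq_of_isMinOn_cone hcone hmin hzbarC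
  refine ⟨hcone α hα.le zbar hzbarC, isMinOn_smul_of_isMinOn_cone hcone hmin hα, ?_⟩
  rw [smul_dotProduct_mulVec_smul, dotProduct_smul, smul_eq_mul, ← heuler]
  ring
end

section
/- Let φ(T) = exp(−(r + θ²/2)T − θ√T·Z) with Z standard normal, r ∈ R, θ > 0, T > 0, and μ, γ > 0. Then E[φ(T)·(μ − γφ(T))⁺] = μ·e^{−rT}·N(h₂) − γ·e^{−(2r−θ²)T}·N(h₃), where N is the standard normal CDF, h₂ = (ln(μ/γ) + (r − θ²/2)T)/(θ√T) and h₃ = (ln(μ/γ) + (r − 3θ²/2)T)/(θ√T). -/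
open MeasureTheory ProbabilityTheory Real

/-- The standard normal cumulative distribution function. -/
noncomputable def stdNormalCDF (y : ℝ) : ℝ :=
  (Real.sqrt (2 * Real.pi))⁻¹ * ∫ t in Set.Iic y, Real.exp (-(t^2) / 2)

lemma gaussianPDFReal_zero_one (z : ℝ) :
    gaussianPDFReal 0 1 z = (Real.sqrt (2 * Real.pi))⁻¹ * Real.exp (-(z^2) / 2) := by
  simp [gaussianPDFReal]

lemma gauss_integral_eq (g : ℝ → ℝ) :
    ∫ x, g x ∂(gaussianReal 0 1) = ∫ x, gaussianPDFReal 0 1 x * g x := by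
  rw [gaussianReal_of_var_ne_zero _ one_ne_zero]
  have h : gaussianPDF 0 1 = fun x => ((gaussianPDFReal 0 1 x).toNNReal : ENNReal) := by
    funext x; rfl
  rw [h, integral_withDensity_eq_integral_smul (f := fun x => (gaussianPDFReal 0 1 x).toNNReal)
    (measurable_real_toNNReal.comp (measurable_gaussianPDFReal 0 1)) g]
  congr 1
  funext x
  simp [NNReal.smul_def, Real.coe_toNNReal _ (gaussianPDFReal_nonneg 0 1 x)]

lemma integrable_pdf_exp (k : ℝ) :
    Integrable (fun z => gaussianPDFReal 0 1 z * Real.exp (-(k * z))) := by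
  have heq : (fun z => gaussianPDFReal 0 1 z * Real.exp (-(k * z)))
      = fun z => ((Real.sqrt (2 * Real.pi))⁻¹ * Real.exp (k^2/2)) *
          Real.exp (-(1/2 : ℝ) * (z + k)^2) := by
    funext z
    rw [gaussianPDFReal_zero_one, mul_assoc, mul_assoc, ← Real.exp_add, ← Real.exp_add]
    ring_nf
  rw [heq]
  have h1 : Integrable (fun z : ℝ => Real.exp (-(1/2 : ℝ) * z^2)) :=
    integrable_exp_neg_mul_sq (by norm_num)
  have h2 : Integrable (fun z : ℝ => Real.exp (-(1/2 : ℝ) * (z + k)^2)) :=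
    h1.comp_add_right k
  exact h2.const_mul _

lemma gauss_exp_halfline (k c : ℝ) :
    ∫ z in Set.Ioi (-c), gaussianPDFReal 0 1 z * Real.exp (-(k * z))
      = Real.exp (k^2/2) * stdNormalCDF (c - k) := by
  have heq : ∀ z, gaussianPDFReal 0 1 z * Real.exp (-(k * z))
      = ((Real.sqrt (2 * Real.pi))⁻¹ * Real.exp (k^2/2)) *
          Real.exp (-((z + k)^2) / 2) := by
    intro z
    rw [gaussianPDFReal_zero_one, mul_assoc, mul_assoc, ← Real.exp_add, ← Real.exp_add]
    ring_nf
  simp_rw [heq]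
  rw [integral_const_mul]
  have hshift : ∫ z in Set.Ioi (-c), Real.exp (-((z + k)^2) / 2)
      = ∫ t in Set.Ioi (k - c), Real.exp (-(t^2) / 2) := by
    rw [← integral_indicator measurableSet_Ioi, ← integral_indicator measurableSet_Ioi]
    have : (fun z => Set.indicator (Set.Ioi (-c)) (fun z => Real.exp (-((z + k)^2) / 2)) z)
        = fun z => Set.indicator (Set.Ioi (k - c)) (fun t => Real.exp (-(t^2) / 2)) (z + k) := by
      funext z
      by_cases hz : z ∈ Set.Ioi (-c)
      · rw [Set.indicator_of_mem hz, Set.indicator_of_mem (by simp at hz ⊢; linarith)]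
      · rw [Set.indicator_of_notMem hz, Set.indicator_of_notMem
          (by simp at hz ⊢; linarith)]
    rw [this, integral_add_right_eq_self]
  rw [hshift]
  have hneg : ∫ t in Set.Ioi (k - c), Real.exp (-(t^2) / 2)
      = ∫ x in Set.Iic (c - k), Real.exp (-(x^2) / 2) := by
    have := integral_comp_neg_Iic (c - k)
      (fun t => Real.exp (-(t^2) / 2))
    simp only [neg_sub] at this
    rw [← this]
    congr 1
    funext x
    rw [neg_pow, neg_one_sq, one_mul]
  rw [hneg, stdNormalCDF]
  ring

theorem stmt9 (r θ T μ γ : ℝ) (hθ : 0 < θ) (hT : 0 < T) (hμ : 0 < μ) (hγ : 0 < γ) :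
    ∫ z, Real.exp (-(r + θ^2/2) * T - θ * Real.sqrt T * z) *
        max (μ - γ * Real.exp (-(r + θ^2/2) * T - θ * Real.sqrt T * z)) 0
        ∂(gaussianReal 0 1)
      = μ * Real.exp (-r * T) *
          stdNormalCDF ((Real.log (μ/γ) + (r - θ^2/2) * T) / (θ * Real.sqrt T))
        - γ * Real.exp (-(2*r - θ^2) * T) *
          stdNormalCDF ((Real.log (μ/γ) + (r - 3*θ^2/2) * T) / (θ * Real.sqrt T)) := by
  set b : ℝ := θ * Real.sqrt T with hb_def
  have hsqT : 0 < Real.sqrt T := Real.sqrt_pos.mpr hT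
  have hb : 0 < b := mul_pos hθ hsqT
  set A : ℝ := (r + θ^2/2) * T with hA_def
  set c : ℝ := (Real.log (μ/γ) + A) / b with hc_def
  have hb2 : b^2 = θ^2 * T := by
    rw [hb_def, mul_pow, Real.sq_sqrt hT.le]
  -- pointwise rewriting of the integrand as an indicator
  have hmax : ∀ z : ℝ,
      Real.exp (-A - b * z) * max (μ - γ * Real.exp (-A - b * z)) 0
        = Set.indicator (Set.Ioi (-c))
            (fun z => μ * Real.exp (-A - b * z) - γ * Real.exp (-A - b * z) ^ 2) z := by
    intro z
    have key0 : -((Real.log (μ/γ) + A) / b) < z ↔ Real.exp (-A - b * z) < μ / γ := by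
      rw [← Real.lt_log_iff_exp_lt (div_pos hμ hγ), ← neg_div, div_lt_iff₀ hb]
      constructor <;> intro h <;> nlinarith [h]
    have hiff : z ∈ Set.Ioi (-c) ↔ γ * Real.exp (-A - b * z) < μ := by
      rw [Set.mem_Ioi, hc_def, key0, lt_div_iff₀ hγ, mul_comm]
    by_cases hz : z ∈ Set.Ioi (-c)
    · rw [Set.indicator_of_mem hz]
      have hpos : 0 ≤ μ - γ * Real.exp (-A - b * z) := le_of_lt (by
        have := hiff.mp hz; linarith)
      rw [max_eq_left hpos]
      ring
    · rw [Set.indicator_of_notMem hz]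
      have hle : μ - γ * Real.exp (-A - b * z) ≤ 0 := by
        by_contra hcon
        push_neg at hcon
        exact hz (hiff.mpr (by linarith))
      rw [max_eq_right hle, mul_zero]
  -- pass to Lebesgue integral with density
  have key : ∫ z, Real.exp (-A - b * z) * max (μ - γ * Real.exp (-A - b * z)) 0
        ∂(gaussianReal 0 1)
      = μ * Real.exp (-A) * (Real.exp (b^2/2) * stdNormalCDF (c - b))
        - γ * Real.exp (-(2*A)) * (Real.exp ((2*b)^2/2) * stdNormalCDF (c - 2*b)) := by
    rw [gauss_integral_eq]
    have step1 : (fun z => gaussianPDFReal 0 1 z *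
          (Real.exp (-A - b * z) * max (μ - γ * Real.exp (-A - b * z)) 0))
        = fun z => Set.indicator (Set.Ioi (-c))
            (fun z => μ * Real.exp (-A) * (gaussianPDFReal 0 1 z * Real.exp (-(b * z)))
              - γ * Real.exp (-(2*A)) * (gaussianPDFReal 0 1 z * Real.exp (-(2*b * z)))) z := by
      funext z
      rw [hmax z]
      by_cases hz : z ∈ Set.Ioi (-c)
      · rw [Set.indicator_of_mem hz, Set.indicator_of_mem hz]
        simp only [show -A - b * z = -A + -(b*z) from by ring,
          show -(2*A) = -A + -A from by ring,
          show -(2*b*z) = -(b*z) + -(b*z) from by ring, Real.exp_add]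
        ring
      · rw [Set.indicator_of_notMem hz, Set.indicator_of_notMem hz, mul_zero]
    rw [step1, integral_indicator measurableSet_Ioi]
    rw [integral_sub
      (((integrable_pdf_exp b).const_mul (μ * Real.exp (-A))).integrableOn)
      (((integrable_pdf_exp (2*b)).const_mul (γ * Real.exp (-(2*A)))).integrableOn)]
    rw [integral_const_mul, integral_const_mul, gauss_exp_halfline b c,
      gauss_exp_halfline (2*b) c]
  have hInt : (fun z : ℝ => Real.exp (-(r + θ^2/2) * T - θ * Real.sqrt T * z) *
        max (μ - γ * Real.exp (-(r + θ^2/2) * T - θ * Real.sqrt T * z)) 0)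
      = fun z => Real.exp (-A - b * z) * max (μ - γ * Real.exp (-A - b * z)) 0 := by
    funext z
    rw [hA_def, hb_def]
    ring_nf
  rw [hInt, key]
  -- arithmetic simplifications
  have e1 : Real.exp (-A) * Real.exp (b^2/2) = Real.exp (-r * T) := by
    rw [← Real.exp_add, hA_def]; congr 1; linear_combination hb2 / 2
  have e2 : Real.exp (-(2*A)) * Real.exp ((2*b)^2/2) = Real.exp (-(2*r - θ^2) * T) := by
    rw [← Real.exp_add, hA_def]; congr 1; linear_combination 2 * hb2
  have h2 : c - b = (Real.log (μ/γ) + (r - θ^2/2) * T) / (θ * Real.sqrt T) := by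
    rw [hc_def, hA_def, ← hb_def, eq_div_iff (ne_of_gt hb), sub_mul,
      div_mul_cancel₀ _ (ne_of_gt hb)]
    linear_combination (-(θ^2)) * Real.sq_sqrt hT.le
  have h3 : c - 2*b = (Real.log (μ/γ) + (r - 3*θ^2/2) * T) / (θ * Real.sqrt T) := by
    rw [hc_def, hA_def, ← hb_def, eq_div_iff (ne_of_gt hb), sub_mul,
      div_mul_cancel₀ _ (ne_of_gt hb)]
    linear_combination (-2*θ^2) * Real.sq_sqrt hT.le
  rw [h2, h3, ← e1, ← e2]
  ring
end
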